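/- Let C be an updown category satisfying the sequential commutation condition with scalars r_0, r_1, …. Then for every a ≥ 0: Σ_{|q|=a} d(0̂;q)·u(0̂;q) = Π_{i=0}^{a-1} (r_0 + r_1 + ⋯ + r_i). -/
import Mathlib


/-! Core definitions: updown categories (Hoffman, "Updown categories"). -/

/-- The underlying data of a (small) category equipped with an ℕ-valued rank,
finite levels (given as `Finset`s) and a distinguished rank-0 object `zero`. -/
structure UpdownData where
  Obj : Type
  Hom : Obj → Obj → Type
  id : ∀ p : Obj, Hom p p
  comp : ∀ {p q r : Obj}, Hom p q → Hom q r → Hom p r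
  id_comp : ∀ {p q : Obj} (f : Hom p q), comp (id p) f = f
  comp_id : ∀ {p q : Obj} (f : Hom p q), comp f (id q) = f
  assoc : ∀ {p q r s : Obj} (f : Hom p q) (g : Hom q r) (h : Hom r s),
    comp (comp f g) h = comp f (comp g h)
  rank : Obj → ℕ
  level : ℕ → Finset Obj
  zero : Obj

namespace UpdownData

/-- Axioms A1–A5 of an updown category. -/
structure IsUpdownCat (C : UpdownData) : Prop where
  /-- `level n` is exactly the (finite) set of objects of rank `n` (A1). -/
  mem_level : ∀ (n : ℕ) (p : C.Obj), p ∈ C.level n ↔ C.rank p = n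
  /-- A2: `zero` is the unique rank-0 object. -/
  rank_zero : C.rank C.zero = 0
  zero_unique : ∀ p : C.Obj, C.rank p = 0 → p = C.zero
  /-- A2: there is a morphism from `zero` to every object. -/
  zero_init : ∀ p : C.Obj, Nonempty (C.Hom C.zero p)
  /-- A3: hom-sets are finite. -/
  homFinite : ∀ p q : C.Obj, Finite (C.Hom p q)
  /-- A3: `Hom p q` is empty unless `rank p < rank q` or `p = q`. -/
  hom_rank : ∀ p q : C.Obj, C.Hom p q → (C.rank p < C.rank q ∨ p = q)
  /-- A3: every endomorphism is invertible, so `Hom p p = Aut p` is a group. -/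
  aut_group : ∀ (p : C.Obj) (f : C.Hom p p),
    ∃ g : C.Hom p p, C.comp f g = C.id p ∧ C.comp g f = C.id p
  /-- A4: every morphism raising rank by more than one factors through the
  next level (hence, inductively, through all intermediate levels). -/
  factor : ∀ (p q : C.Obj) (f : C.Hom p q), C.rank p + 1 < C.rank q →
    ∃ (r : C.Obj) (g : C.Hom p r) (h : C.Hom r q),
      C.rank r = C.rank p + 1 ∧ C.comp g h = f
  /-- A5: `Aut p` acts freely on `Hom p q` by precomposition when
  `rank q = rank p + 1`. -/
  free_pre : ∀ (p q : C.Obj), C.rank q = C.rank p + 1 →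
    ∀ (α : C.Hom p p) (f : C.Hom p q), C.comp α f = f → α = C.id p
  /-- A5: `Aut q` acts freely on `Hom p q` by postcomposition when
  `rank q = rank p + 1`. -/
  free_post : ∀ (p q : C.Obj), C.rank q = C.rank p + 1 →
    ∀ (β : C.Hom q q) (f : C.Hom p q), C.comp f β = f → β = C.id q

/-- An updown category is unilateral if all automorphism groups are trivial. -/
def Unilateral (C : UpdownData) : Prop :=
  ∀ (p : C.Obj) (f : C.Hom p p), f = C.id p

/-- An updown category is simple if there is at most one morphism between any
two objects and morphisms factor uniquely into rank-1 steps (so the object at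
each intermediate rank in a factorization is unique). -/
def SimpleUD (C : UpdownData) : Prop :=
  (∀ p q : C.Obj, Subsingleton (C.Hom p q)) ∧
  (∀ (p q : C.Obj) (f : C.Hom p q) (k : ℕ), C.rank p < k → k < C.rank q →
    ∃! r : C.Obj, C.rank r = k ∧
      ∃ (g : C.Hom p r) (h : C.Hom r q), C.comp g h = f)

end UpdownData

/-! Up and down operators on the free vector space `Obj →₀ ℚ`. -/

namespace UpdownData

variable (C : UpdownData)

/-- `u(p;p') = |Hom(p,p')|/|Aut(p')|` (as a rational number). -/
noncomputable def uQ (p q : C.Obj) : ℚ :=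
  (Nat.card (C.Hom p q) : ℚ) / (Nat.card (C.Hom q q) : ℚ)

/-- `d(p;p') = |Hom(p,p')|/|Aut(p)|` (as a rational number). -/
noncomputable def dQ (p q : C.Obj) : ℚ :=
  (Nat.card (C.Hom p q) : ℚ) / (Nat.card (C.Hom p p) : ℚ)

/-- The free `ℚ`-vector space on the objects of `C`. -/
abbrev Vec := C.Obj →₀ ℚ

/-- `U(p) = Σ_{|p'| = |p|+1} u(p;p')·p'`. -/
noncomputable def Uvec (p : C.Obj) : C.Vec :=
  ∑ q ∈ C.level (C.rank p + 1), C.uQ p q • Finsupp.single q 1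

/-- `D(p) = Σ_{|p''| = |p|-1} d(p'';p)·p''`, and `D(0̂) = 0`. -/
noncomputable def Dvec (p : C.Obj) : C.Vec :=
  if C.rank p = 0 then 0
  else ∑ q ∈ C.level (C.rank p - 1), C.dQ q p • Finsupp.single q 1

/-- The up operator. -/
noncomputable def Uop : C.Vec →ₗ[ℚ] C.Vec :=
  Finsupp.lsum ℚ fun p => LinearMap.toSpanSingleton ℚ C.Vec (C.Uvec p)

/-- The down operator. -/
noncomputable def Dop : C.Vec →ₗ[ℚ] C.Vec :=
  Finsupp.lsum ℚ fun p => LinearMap.toSpanSingleton ℚ C.Vec (C.Dvec p)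

/-- The inner product with `⟨p,p⟩ = |Aut(p)|` on basis elements. -/
noncomputable def innerUD (x y : C.Vec) : ℚ :=
  x.sum fun p c => c * y p * (Nat.card (C.Hom p p) : ℚ)

/-- The commutator `DU - UD`. -/
noncomputable def commDU : C.Vec →ₗ[ℚ] C.Vec :=
  C.Dop ∘ₗ C.Uop - C.Uop ∘ₗ C.Dop

/-- Extended multiplicity `u(p;q)`: the coefficient of `q` in
`U^{|q|-|p|}(p)`, i.e. `⟨U^{|q|-|p|}(p), q⟩ / |Aut q|`. -/
noncomputable def uext (p q : C.Obj) : ℚ :=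
  ((C.Uop ^ (C.rank q - C.rank p)) (Finsupp.single p 1)) q

/-- Extended multiplicity `d(p;q)`: the coefficient of `p` in
`D^{|q|-|p|}(q)`. -/
noncomputable def dext (p q : C.Obj) : ℚ :=
  ((C.Dop ^ (C.rank q - C.rank p)) (Finsupp.single q 1)) p

/-- The weak commutation condition with eigenvalue function `ε`:
every object is an eigenvector of `DU - UD`. -/
def WCC (ε : C.Obj → ℚ) : Prop :=
  ∀ p : C.Obj, C.commDU (Finsupp.single p 1) = ε p • Finsupp.single p 1

/-- The sequential commutation condition: `DU - UD` acts as the scalar `r i`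
on rank `i`. -/
def SCC (r : ℕ → ℚ) : Prop :=
  ∀ p : C.Obj, C.commDU (Finsupp.single p 1) = r (C.rank p) • Finsupp.single p 1

end UpdownData

namespace UpdownData

variable (C : UpdownData)

lemma Uop_single (p : C.Obj) : C.Uop (Finsupp.single p 1) = C.Uvec p := by
  simp [Uop]

lemma Dop_single (p : C.Obj) : C.Dop (Finsupp.single p 1) = C.Dvec p := by
  simp [Dop]

lemma Uvec_support (p : C.Obj) :
    (C.Uvec p).support ⊆ C.level (C.rank p + 1) := by
  classical
  refine (Finsupp.support_finset_sum).trans ?_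
  intro q hq
  rcases Finset.mem_biUnion.mp hq with ⟨s, hs, hqs⟩
  have := Finsupp.support_smul hqs
  have := Finsupp.support_single_subset this
  simpa [Finset.mem_singleton.mp this] using hs

lemma Uop_support (v : C.Vec) (n : ℕ) (hC : C.IsUpdownCat)
    (hv : ∀ q ∈ v.support, C.rank q = n) :
    ∀ q ∈ (C.Uop v).support, C.rank q = n + 1 := by
  classical
  intro q hq
  have h1 : C.Uop v = v.sum fun p c => c • C.Uvec p := by
    rw [Uop, Finsupp.lsum_apply]
    exact Finsupp.sum_congr fun p _ => by simp
  rw [h1] at hq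
  have h2 := Finsupp.support_sum hq
  rcases Finset.mem_biUnion.mp h2 with ⟨p, hp, hqp⟩
  have h3 : q ∈ (C.Uvec p).support := Finsupp.support_smul hqp
  have h4 := C.Uvec_support p h3
  have := (hC.mem_level _ q).mp h4
  rw [hv p hp] at this
  exact this

lemma Upow_support (hC : C.IsUpdownCat) (n : ℕ) :
    ∀ q ∈ ((C.Uop ^ n) (Finsupp.single C.zero 1)).support, C.rank q = n := by
  induction n with
  | zero =>
    intro q hq
    simp only [pow_zero, Module.End.one_apply] at hq
    have := Finsupp.support_single_subset hq
    rw [Finset.mem_singleton.mp this]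
    exact hC.rank_zero
  | succ n ih =>
    intro q hq
    rw [pow_succ', Module.End.mul_apply] at hq
    exact C.Uop_support _ n hC ih q hq

lemma commDU_eigen (v : C.Vec) (n : ℕ) (r : ℕ → ℚ) (hS : C.SCC r)
    (hv : ∀ q ∈ v.support, C.rank q = n) :
    C.commDU v = r n • v := by
  classical
  conv_lhs => rw [← Finsupp.sum_single v, Finsupp.sum, map_sum]
  conv_rhs => rw [← Finsupp.sum_single v, Finsupp.sum, Finset.smul_sum]
  refine Finset.sum_congr rfl fun q hq => ?_
  have h1 : Finsupp.single q (v q) = (v q) • Finsupp.single q (1 : ℚ) := by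
    simp
  rw [h1, map_smul, hS q, hv q hq, smul_comm]

lemma Dop_zero (hC : C.IsUpdownCat) : C.Dop (Finsupp.single C.zero 1) = 0 := by
  rw [C.Dop_single, Dvec, if_pos hC.rank_zero]

lemma D_Upow (hC : C.IsUpdownCat) (r : ℕ → ℚ) (hS : C.SCC r) (n : ℕ) :
    C.Dop ((C.Uop ^ (n + 1)) (Finsupp.single C.zero 1)) =
      (∑ j ∈ Finset.range (n + 1), r j) • (C.Uop ^ n) (Finsupp.single C.zero 1) := by
  induction n with
  | zero =>
    have h1 : (C.Uop ^ 1) (Finsupp.single C.zero 1) = C.Uop (Finsupp.single C.zero 1) := by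
      simp
    have h2 := C.commDU_eigen (Finsupp.single C.zero 1) 0 r hS (by
      intro q hq
      have := Finsupp.support_single_subset hq
      rw [Finset.mem_singleton.mp this]; exact hC.rank_zero)
    have h3 : C.commDU (Finsupp.single C.zero 1) =
        C.Dop (C.Uop (Finsupp.single C.zero 1)) -
          C.Uop (C.Dop (Finsupp.single C.zero 1)) := rfl
    rw [h1]
    rw [h3, C.Dop_zero hC, map_zero, sub_zero] at h2
    simpa using h2
  | succ n ih =>
    have hpow : (C.Uop ^ (n + 2)) (Finsupp.single C.zero 1) =
        C.Uop ((C.Uop ^ (n + 1)) (Finsupp.single C.zero 1)) := by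
      rw [pow_succ', Module.End.mul_apply]
    set w := (C.Uop ^ (n + 1)) (Finsupp.single C.zero 1) with hw
    have hsupp : ∀ q ∈ w.support, C.rank q = n + 1 := C.Upow_support hC (n + 1)
    have h2 := C.commDU_eigen w (n + 1) r hS hsupp
    have h3 : C.commDU w = C.Dop (C.Uop w) - C.Uop (C.Dop w) := rfl
    rw [h3] at h2
    have h4 : C.Dop (C.Uop w) = r (n + 1) • w + C.Uop (C.Dop w) :=
      sub_eq_iff_eq_add.mp h2
    rw [hpow, h4, ih, map_smul]
    rw [Finset.sum_range_succ (n := n + 1), add_smul]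
    have hU : w = C.Uop ((C.Uop ^ n) (Finsupp.single C.zero 1)) := by
      rw [hw, pow_succ', Module.End.mul_apply]
    rw [hU]
    abel

lemma Dpow_Upow (hC : C.IsUpdownCat) (r : ℕ → ℚ) (hS : C.SCC r) (a : ℕ) :
    (C.Dop ^ a) ((C.Uop ^ a) (Finsupp.single C.zero 1)) =
      (∏ i ∈ Finset.range a, ∑ j ∈ Finset.range (i + 1), r j) •
        Finsupp.single C.zero 1 := by
  induction a with
  | zero => simp
  | succ a ih =>
    have h1 : (C.Dop ^ (a + 1)) ((C.Uop ^ (a + 1)) (Finsupp.single C.zero 1)) =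
        (C.Dop ^ a) (C.Dop ((C.Uop ^ (a + 1)) (Finsupp.single C.zero 1))) := by
      rw [pow_succ, Module.End.mul_apply]
    rw [h1, C.D_Upow hC r hS a, map_smul, ih, Finset.prod_range_succ, smul_smul,
      mul_comm]

end UpdownData

open UpdownData in
/-- under the sequential commutation condition,
`Σ_{|q|=a} d(0̂;q)·u(0̂;q) = Π_{i=0}^{a-1}(r_0 + ⋯ + r_i)`. -/
theorem updown_scc_sum_formula_zero (C : UpdownData) (hC : C.IsUpdownCat)
    (r : ℕ → ℚ) (hS : C.SCC r) (a : ℕ) :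
    ∑ q ∈ C.level a, C.dext C.zero q * C.uext C.zero q =
      ∏ i ∈ Finset.range a, ∑ j ∈ Finset.range (i + 1), r j := by
  classical
  set z := Finsupp.single C.zero (1 : ℚ) with hz
  set w := (C.Uop ^ a) z with hw
  have hsupp : ∀ q ∈ w.support, C.rank q = a := C.Upow_support hC a
  have hsub : w.support ⊆ C.level a := fun q hq =>
    (hC.mem_level a q).mpr (hsupp q hq)
  have hrank0 : C.rank C.zero = 0 := hC.rank_zero
  have key : ∀ q ∈ C.level a,
      C.dext C.zero q * C.uext C.zero q =
        w q * ((C.Dop ^ a) (Finsupp.single q 1)) C.zero := by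
    intro q hq
    have hrq : C.rank q = a := (hC.mem_level a q).mp hq
    have hd : C.rank q - C.rank C.zero = a := by rw [hrq, hrank0]; omega
    rw [dext, uext, hd, mul_comm]
  rw [Finset.sum_congr rfl key]
  have hext : ∑ q ∈ C.level a, w q * ((C.Dop ^ a) (Finsupp.single q 1)) C.zero =
      ∑ q ∈ w.support, w q * ((C.Dop ^ a) (Finsupp.single q 1)) C.zero := by
    refine (Finset.sum_subset hsub ?_).symm
    intro q _ hq
    rw [Finsupp.notMem_support_iff.mp hq, zero_mul]
  rw [hext]
  have hDw : (C.Dop ^ a) w =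
      ∑ q ∈ w.support, w q • (C.Dop ^ a) (Finsupp.single q 1) := by
    conv_lhs => rw [← Finsupp.sum_single w, Finsupp.sum, map_sum]
    refine Finset.sum_congr rfl fun q _ => ?_
    have : Finsupp.single q (w q) = (w q) • Finsupp.single q (1 : ℚ) := by simp
    rw [this, map_smul]
  have heval : ((C.Dop ^ a) w) C.zero =
      ∑ q ∈ w.support, w q * ((C.Dop ^ a) (Finsupp.single q 1)) C.zero := by
    rw [hDw, Finsupp.finset_sum_apply]
    refine Finset.sum_congr rfl fun q _ => ?_
    simp [Finsupp.smul_apply]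
  rw [← heval, C.Dpow_Upow hC r hS a]
  simp
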